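/- For every sufficiently large integer n divisible by 16, the derived graph F_{S_n} has minimum degree at least n/9. -/

import Mathlib

/-!
Write `n = 16m`. Whatever the position of `x` in `[1, n]`, one can fix whether `x` is the
smallest or the largest vertex of an edge and whether the edge sums to `n` or to `2n` so that
a whole run of `2m - 1` consecutive values `z` can serve as the other end, the middle vertex
being forced to be `n - x - z` or `2n - x - z`. Hence every degree is at least
`2m - 1 ≥ n / 9` once `m ≥ 5`.
-/

/-- `Sedge n x y z` : `{x, y, z}` with `x < y < z` is an edge of the `3`-uniform
hypergraph `S_n` on `{1, …, n}`, i.e. `x + y + z = n` or `x + y + z = 2n`. -/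
def Sedge (n x y z : ℕ) : Prop :=
  1 ≤ x ∧ x < y ∧ y < z ∧ z ≤ n ∧ (x + y + z = n ∨ x + y + z = 2 * n)

/-- The derived graph `F_{S_n}`: `a` and `b` are adjacent iff some edge `x < y < z`
of `S_n` has `{a, b} = {x, z}`. -/
def FS (n : ℕ) : SimpleGraph ℕ where
  Adj a b := (∃ y, Sedge n a y b) ∨ (∃ y, Sedge n b y a)
  symm := ⟨fun _ _ h => h.symm⟩
  loopless := ⟨fun a h => by
    rcases h with ⟨y, h1, h2, h3, h4, h5⟩ | ⟨y, h1, h2, h3, h4, h5⟩ <;> omega⟩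

lemma neighborSet_FS_subset_Icc (n x : ℕ) : (FS n).neighborSet x ⊆ Set.Icc 1 n := by
  rintro b (⟨y, hb⟩ | ⟨y, hb⟩) <;> (unfold Sedge at hb; simp only [Set.mem_Icc]; omega)

lemma finite_neighborSet_FS (n x : ℕ) : ((FS n).neighborSet x).Finite :=
  (Set.finite_Icc 1 n).subset (neighborSet_FS_subset_Icc n x)

lemma exists_Icc_subset_neighborSet_FS {m x : ℕ} (hx₁ : 1 ≤ x) (hxn : x ≤ 16 * m) :
    ∃ lo, Set.Icc lo (lo + 2 * m - 2) ⊆ (FS (16 * m)).neighborSet x := by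
  rcases le_or_gt x (4 * m) with hx | hx
  · exact ⟨14 * m - 2 * x + 1, fun z hz => Or.inl
      ⟨16 * m - x - z, by unfold Sedge; simp only [Set.mem_Icc] at hz; omega⟩⟩
  rcases le_or_gt x (8 * m) with hx' | hx'
  · exact ⟨14 * m + 1, fun z hz => Or.inl
      ⟨2 * (16 * m) - x - z, by unfold Sedge; simp only [Set.mem_Icc] at hz; omega⟩⟩
  rcases le_or_gt x (12 * m) with hx'' | hx''
  · exact ⟨1, fun z hz => Or.inr
      ⟨16 * m - x - z, by unfold Sedge; simp only [Set.mem_Icc] at hz; omega⟩⟩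
  · exact ⟨2 * (16 * m) - 2 * x + 1, fun z hz => Or.inr
      ⟨2 * (16 * m) - x - z, by unfold Sedge; simp only [Set.mem_Icc] at hz; omega⟩⟩

/-- For every sufficiently large `n` divisible by `16`, the derived graph `F_{S_n}` has
minimum degree at least `n/9`: every vertex `x ∈ {1, …, n}` has at least `n/9`
neighbours. -/
theorem FS_min_degree : ∃ N : ℕ, ∀ n : ℕ, N ≤ n → 16 ∣ n →
    ∀ x ∈ Finset.Icc 1 n, n ≤ 9 * ((FS n).neighborSet x).ncard := by
  refine ⟨80, fun n hn h16 x hx => ?_⟩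
  obtain ⟨m, rfl⟩ := h16
  rw [Finset.mem_Icc] at hx
  obtain ⟨lo, hsub⟩ := exists_Icc_subset_neighborSet_FS hx.1 hx.2
  have hcard := Set.ncard_le_ncard hsub (finite_neighborSet_FS _ x)
  rw [Set.ncard_Icc_nat] at hcard
  omega
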